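/- For every a in [1 - 1/(2*243^2), 1], the first homology group H_1(Rips(K, a)) of the Vietoris-Rips complex of the compact set K at scale a is uncountably generated (has rank at least 2^{aleph_0}), where K = closure(T) union {0} x [0,1]^3 union {1} x [0,1]^3 subset of R^4 and T = { (x/(2*243^2), e(x,y)) : x in [0,1], y in D } for the (1/243)-close-expanding injection e : [0,1] x D -> [0,1]^3 with D of cardinality 2^{aleph_0}. -/

import Mathlib

-- `ℝ⁴` identified with `ℝ × ℝ³`, carrying the Euclidean (`L²`) metric.
abbrev R4 : Type := WithLp 2 (ℝ × EuclideanSpace ℝ (Fin 3))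

-- The point of `ℝ⁴` with first coordinate `x` and last three coordinates `u`.
noncomputable def pt (x : ℝ) (u : EuclideanSpace ℝ (Fin 3)) : R4 :=
  (WithLp.equiv 2 (ℝ × EuclideanSpace ℝ (Fin 3))).symm (x, u)

-- The unit cube `[0,1]³`.
def cube : Set (EuclideanSpace ℝ (Fin 3)) := {u | ∀ i, u i ∈ Set.Icc (0:ℝ) 1}

-- The set `T = {(x/(2·243²), e(x,y)) : x ∈ [0,1], y ∈ D} ⊆ ℝ⁴`.
def T {D : Type*} (e : Set.Icc (0:ℝ) 1 × D → EuclideanSpace ℝ (Fin 3)) : Set R4 :=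
  {z | ∃ x : Set.Icc (0:ℝ) 1, ∃ y : D, z = pt ((x : ℝ) / (2 * 243 ^ 2)) (e (x, y))}

-- Simplicial 1-chains, cycles, boundaries and first homology of an abstract
-- simplicial complex `K` (given as a set of finite sets of vertices), with
-- integer coefficients. Chains are built on ordered tuples of vertices.

-- The boundary map on 1-chains: `(x, y) ↦ y - x`.
noncomputable def bd1 (V : Type*) : ((V × V) →₀ ℤ) →ₗ[ℤ] (V →₀ ℤ) :=
  Finsupp.lsum ℤ fun p => LinearMap.toSpanSingleton ℤ _
    (Finsupp.single p.2 1 - Finsupp.single p.1 1)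

-- The boundary map on 2-chains: `(x, y, z) ↦ (y,z) - (x,z) + (x,y)`.
noncomputable def bd2 (V : Type*) : ((V × V × V) →₀ ℤ) →ₗ[ℤ] ((V × V) →₀ ℤ) :=
  Finsupp.lsum ℤ fun p => LinearMap.toSpanSingleton ℤ _
    (Finsupp.single (p.2.1, p.2.2) 1 - Finsupp.single (p.1, p.2.2) 1
      + Finsupp.single (p.1, p.2.1) 1)

-- 1-chains supported on the edges (1-simplexes) of the complex `K`.
open Classical in
noncomputable def oneChains {V : Type*} (K : Set (Finset V)) :
    Submodule ℤ ((V × V) →₀ ℤ) where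
  carrier := {c | ∀ p ∈ c.support, p.1 ≠ p.2 ∧ ({p.1, p.2} : Finset V) ∈ K}
  add_mem' := by
    intro a b ha hb p hp
    rcases Finset.mem_union.1 (Finsupp.support_add hp) with h | h
    · exact ha p h
    · exact hb p h
  zero_mem' := by intro p hp; simp at hp
  smul_mem' := by
    intro z c hc p hp
    exact hc p (Finsupp.support_smul hp)

-- 2-chains supported on the triangles (2-simplexes) of the complex `K`.
open Classical in
noncomputable def twoChains {V : Type*} (K : Set (Finset V)) :
    Submodule ℤ ((V × V × V) →₀ ℤ) where
  carrier := {c | ∀ p ∈ c.support,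
    ({p.1, p.2.1, p.2.2} : Finset V).card = 3 ∧ ({p.1, p.2.1, p.2.2} : Finset V) ∈ K}
  add_mem' := by
    intro a b ha hb p hp
    rcases Finset.mem_union.1 (Finsupp.support_add hp) with h | h
    · exact ha p h
    · exact hb p h
  zero_mem' := by intro p hp; simp at hp
  smul_mem' := by
    intro z c hc p hp
    exact hc p (Finsupp.support_smul hp)

-- 1-cycles of `K`: 1-chains of `K` with vanishing boundary.
noncomputable def cyclesOne {V : Type*} (K : Set (Finset V)) :
    Submodule ℤ ((V × V) →₀ ℤ) :=
  oneChains K ⊓ LinearMap.ker (bd1 V)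

-- 1-boundaries of `K`: boundaries of 2-chains of `K`.
noncomputable def boundariesOne {V : Type*} (K : Set (Finset V)) :
    Submodule ℤ ((V × V) →₀ ℤ) :=
  Submodule.map (bd2 V) (twoChains K)

-- The first simplicial homology of `K` with integer coefficients:
-- 1-cycles modulo 1-boundaries.
noncomputable def simplicialH1 {V : Type*} (K : Set (Finset V)) : Type _ :=
  (cyclesOne K) ⧸ (Submodule.comap (cyclesOne K).subtype (boundariesOne K))

noncomputable instance {V : Type*} (K : Set (Finset V)) :
    AddCommGroup (simplicialH1 K) :=
  inferInstanceAs (AddCommGroup ((cyclesOne K) ⧸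
    (Submodule.comap (cyclesOne K).subtype (boundariesOne K))))

noncomputable instance {V : Type*} (K : Set (Finset V)) :
    Module ℤ (simplicialH1 K) :=
  inferInstanceAs (Module ℤ ((cyclesOne K) ⧸
    (Submodule.comap (cyclesOne K).subtype (boundariesOne K))))

-- The Vietoris–Rips complex of a pseudometric space `M` at scale `a`: its
-- `k`-simplexes are the `(k+1)`-element subsets of `M` of diameter at most `a`.
def ripsComplex (M : Type*) [PseudoMetricSpace M] (a : ℝ) : Set (Finset M) :=
  {s | s.Nonempty ∧ ∀ x ∈ s, ∀ y ∈ s, dist x y ≤ a}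

/-!
Write `κ = 2·243²` and `s = 1 - a ∈ [0, 1/κ]`, and put `x₀ = κ s`. For `y ∈ D` the points
`A_y = (s, e(x₀, y)) ∈ T` and `B_y = (1, e(x₀, y))` are at distance exactly `a`. Squaring the
expansion hypothesis gives `2 |z₁ - x/κ| ≤ ‖z' - e(x, y)‖²` for `z = (z₁, z') ∈ T`, a closed
condition which therefore holds on `closure T`; together with the shape of the two faces it shows
that no third point of `K` lies within `a` of both `A_y` and `B_y`. So the edge `A_y B_y` lies in
no 2-simplex, and the coefficient of this edge vanishes on every boundary.

Fix `b ∈ D`. For `y ≠ b`, close the edge `A_y B_y` into a loop: along the top face to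
`(1, e(1, b))`, down to the point `(1/κ, e(1, b))` of `T`, to the bottom face, and back along it
to `A_y`; a cube has diameter `√3`, so one midpoint on each face keeps every step below `a`. The coefficient of the edge `A_{y'} B_{y'}` in the loop of `y` is `δ_{y y'}`, so these
cycles are linearly independent in `H₁`, and there are `#D = 2^ℵ₀` of them.
-/

open Set

local notation "E3" => EuclideanSpace ℝ (Fin 3)
local notation "κ" => (2 * 243 ^ 2 : ℝ)

universe u

section SimplicialChains

variable {V : Type u}

lemma bd1_single (p : V × V) :
    bd1 V (Finsupp.single p 1) = Finsupp.single p.2 1 - Finsupp.single p.1 1 := by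
  simp [bd1]

noncomputable def loopChain {n : ℕ} [NeZero n] (w : Fin n → V) : (V × V) →₀ ℤ :=
  ∑ i, Finsupp.single (w i, w (i + 1)) 1

variable {n : ℕ} [NeZero n]

lemma bd1_loopChain (w : Fin n → V) : bd1 V (loopChain w) = 0 := by
  simp only [loopChain, map_sum, bd1_single, Finset.sum_sub_distrib, sub_eq_zero]
  exact Fintype.sum_equiv (Equiv.addRight 1) _ _ fun _ => rfl

open Classical in
lemma loopChain_mem_cyclesOne {K : Set (Finset V)} {w : Fin n → V}
    (hw : ∀ i, w i ≠ w (i + 1) ∧ {w i, w (i + 1)} ∈ K) : loopChain w ∈ cyclesOne K := by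
  refine ⟨Submodule.sum_mem _ fun i _ p hp => ?_, bd1_loopChain w⟩
  rw [Finsupp.support_single _ one_ne_zero, Finset.mem_singleton] at hp
  exact hp ▸ hw i

lemma loopChain_apply [DecidableEq V] (w : Fin n → V) (p : V × V) :
    loopChain w p = ∑ i, if (w i, w (i + 1)) = p then 1 else 0 := by
  simp [loopChain, Finsupp.finsetSum_apply, Finsupp.single_apply]

open Classical in
lemma apply_eq_zero_of_mem_boundariesOne {K : Set (Finset V)} {u v : V}
    (huv : ¬∃ s ∈ K, s.card = 3 ∧ u ∈ s ∧ v ∈ s) {x : (V × V) →₀ ℤ}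
    (hx : x ∈ boundariesOne K) : x (u, v) = 0 := by
  obtain ⟨c, hc, rfl⟩ := hx
  rw [bd2, Finsupp.lsum_apply, Finsupp.sum_apply]
  refine Finset.sum_eq_zero fun p hp => ?_
  obtain ⟨hcard, hK⟩ := hc p hp
  have hedge : ∀ q r, q ∈ ({p.1, p.2.1, p.2.2} : Finset V) →
      r ∈ ({p.1, p.2.1, p.2.2} : Finset V) → (q, r) ≠ (u, v) := by
    rintro q r hq hr ⟨⟩
    exact huv ⟨_, hK, hcard, hq, hr⟩
  simp [hedge]

lemma cardinal_le_rank_simplicialH1 {ι : Type u} [DecidableEq ι] {K : Set (Finset V)}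
    (σ : ι → cyclesOne K) (P : ι → V × V)
    (hP : ∀ i, ∀ x ∈ boundariesOne K, x (P i) = 0)
    (hσ : ∀ i j, (σ j : (V × V) →₀ ℤ) (P i) = if i = j then 1 else 0) :
    Cardinal.mk ι ≤ Module.rank ℤ (simplicialH1 K) := by
  let f : ι → Module.Dual ℤ (simplicialH1 K) := fun i =>
    Submodule.liftQ _ (Finsupp.lapply (P i) ∘ₗ (cyclesOne K).subtype) fun x hx => hP i x hx
  let v : ι → simplicialH1 K := fun i => Submodule.Quotient.mk (σ i)
  refine LinearIndependent.cardinal_le_rank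
    (LinearIndependent.of_pairwise_dual_eq_zero_one v f (fun i j hij => ?_) fun i => ?_)
  · exact (hσ i j).trans (if_neg hij)
  · exact (hσ i i).trans (if_pos rfl)

end SimplicialChains

section Rips

variable {M : Type*} [PseudoMetricSpace M] {a : ℝ}

open Classical in
lemma pair_mem_ripsComplex (ha : 0 ≤ a) {p q : M} (h : dist p q ≤ a) :
    {p, q} ∈ ripsComplex M a := by
  refine ⟨Finset.insert_nonempty p {q}, fun x hx y hy => ?_⟩
  simp only [Finset.mem_insert, Finset.mem_singleton] at hx hy
  rcases hx with rfl | rfl <;> rcases hy with rfl | rfl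
  exacts [by simpa using ha, h, dist_comm x y ▸ h, by simpa using ha]

lemma not_exists_triangle_of_forall_eq_or_eq {A B : M}
    (hAB : ∀ m, dist m A ≤ a → dist m B ≤ a → m = A ∨ m = B) :
    ¬∃ s ∈ ripsComplex M a, s.card = 3 ∧ A ∈ s ∧ B ∈ s := by
  classical
  rintro ⟨s, hs, hcard, hA, hB⟩
  have hsub : s ⊆ {A, B} := fun m hm => by
    simpa using hAB m (hs.2 m hm A hA) (hs.2 m hm B hB)
  have := (Finset.card_le_card hsub).trans Finset.card_le_two
  omega

end Rips

section Geometry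

@[simp] lemma pt_fst (s : ℝ) (u : E3) : (pt s u).fst = s := rfl

@[simp] lemma pt_snd (s : ℝ) (u : E3) : (pt s u).snd = u := rfl

lemma pt_fst_snd (z : R4) : pt z.fst z.snd = z := rfl

lemma pt_eq_pt_iff {s t : ℝ} {u v : E3} : pt s u = pt t v ↔ s = t ∧ u = v := by
  simp [pt, Prod.ext_iff]

lemma dist_le_iff_of_nonneg {z z' : R4} {a : ℝ} (ha : 0 ≤ a) :
    dist z z' ≤ a ↔ (z.fst - z'.fst) ^ 2 + dist z.snd z'.snd ^ 2 ≤ a ^ 2 := by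
  rw [WithLp.prod_dist_eq_of_L2, Real.sqrt_le_left ha, Real.dist_eq, sq_abs]

lemma sq_dist_le_three_of_mem_cube {u v : E3} (hu : u ∈ cube) (hv : v ∈ cube) :
    dist u v ^ 2 ≤ 3 := by
  rw [EuclideanSpace.dist_eq, Real.sq_sqrt (by positivity), Fin.sum_univ_three]
  have h : ∀ i, dist (u i) (v i) ^ 2 ≤ 1 := fun i => by
    rw [Real.dist_eq, sq_abs]
    nlinarith [(hu i).1, (hu i).2, (hv i).1, (hv i).2]
  linarith [h 0, h 1, h 2]

lemma midpoint_mem_cube {u v : E3} (hu : u ∈ cube) (hv : v ∈ cube) :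
    midpoint ℝ u v ∈ cube := fun i => by
  simp only [midpoint_eq_smul_add, PiLp.smul_apply, PiLp.add_apply, smul_eq_mul, invOf_eq_inv]
  constructor <;> linarith [(hu i).1, (hu i).2, (hv i).1, (hv i).2]

end Geometry

section Loop

noncomputable def loopPt (s : ℝ) (u w : E3) : Fin 7 → R4 :=
  ![pt s u, pt 1 u, pt 1 (midpoint ℝ u w), pt 1 w, pt (1 / κ) w, pt 0 w, pt 0 (midpoint ℝ u w)]

variable {s : ℝ} {u w : E3}

lemma dist_loopPt_succ_le (hs : s ≤ 1 / κ) (hu : u ∈ cube) (hw : w ∈ cube) (i : Fin 7) :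
    dist (loopPt s u w i) (loopPt s u w (i + 1)) ≤ 1 - s := by
  have hd := sq_dist_le_three_of_mem_cube hu hw
  rw [dist_le_iff_of_nonneg (by linarith)]
  fin_cases i <;>
    simp [loopPt, dist_left_midpoint, dist_midpoint_right, dist_right_midpoint,
      dist_midpoint_left] <;> nlinarith

lemma loopPt_ne_succ (hs : s ≤ 1 / κ) (huw : u ≠ w) (i : Fin 7) :
    loopPt s u w i ≠ loopPt s u w (i + 1) := by
  have hs1 : s ≠ 1 := by linarith
  fin_cases i <;> simp [loopPt, pt_eq_pt_iff, hs1, huw]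
  norm_num

lemma loopPt_edge_eq_iff (hs : s ≠ 1) (u' : E3) (i : Fin 7) :
    (loopPt s u w i, loopPt s u w (i + 1)) = (pt s u', pt 1 u') ↔ i = 0 ∧ u = u' := by
  fin_cases i <;> simp [loopPt, pt_eq_pt_iff, hs, hs.symm]

end Loop

section SpaceK

variable {D : Type*} {e : Icc (0:ℝ) 1 × D → E3}

abbrev spaceK (e : Icc (0:ℝ) 1 × D → E3) : Set R4 :=
  closure (T e) ∪ pt 0 '' cube ∪ pt 1 '' cube

lemma two_mul_abs_sub_le_sq_dist_of_mem_closure_T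
    (he : ∀ p q, ‖e p - e q‖ ≥ (1 / 243) * Real.sqrt |(p.1 : ℝ) - (q.1 : ℝ)|)
    {z : R4} (hz : z ∈ closure (T e)) (p : Icc (0:ℝ) 1 × D) :
    2 * |z.fst - p.1 / κ| ≤ dist z.snd (e p) ^ 2 := by
  have hfst : Continuous fun z : R4 => z.fst := WithLp.continuous_fst ..
  have hsnd : Continuous fun z : R4 => z.snd := WithLp.continuous_snd ..
  refine closure_minimal (s := T e) ?_ (isClosed_le (f := fun z : R4 => 2 * |z.fst - p.1 / κ|)
    (g := fun z => dist z.snd (e p) ^ 2) (by fun_prop) (by fun_prop)) hz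
  rintro _ ⟨x, y, rfl⟩
  have hsq := pow_le_pow_left₀ (by positivity) (he (x, y) p) 2
  rw [mul_pow, Real.sq_sqrt (abs_nonneg _), ← dist_eq_norm] at hsq
  change 2 * |(x : ℝ) / κ - p.1 / κ| ≤ dist (e (x, y)) (e p) ^ 2
  rw [← sub_div, abs_div, abs_of_pos (by norm_num : (0:ℝ) < κ)]
  linarith

lemma eq_of_mem_closure_T_of_dist_le
    (he : ∀ p q, ‖e p - e q‖ ≥ (1 / 243) * Real.sqrt |(p.1 : ℝ) - (q.1 : ℝ)|)
    {z : R4} (hz : z ∈ closure (T e)) (p : Icc (0:ℝ) 1 × D)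
    (h : dist z (pt 1 (e p)) ≤ 1 - p.1 / κ) : z = pt (p.1 / κ) (e p) := by
  have hs0 : 0 ≤ (p.1 : ℝ) / κ := by have := p.1.2.1; positivity
  have hs1 : (p.1 : ℝ) / κ ≤ 1 / κ := by gcongr; exact p.1.2.2
  have hsep := two_mul_abs_sub_le_sq_dist_of_mem_closure_T he hz p
  rw [dist_le_iff_of_nonneg (by linarith)] at h
  change (z.fst - 1) ^ 2 + dist z.snd (e p) ^ 2 ≤ _ at h
  have hfst : z.fst = p.1 / κ := by
    rcases lt_trichotomy z.fst (p.1 / κ) with hlt | heq | hgt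
    · rw [abs_of_neg (by linarith)] at hsep
      nlinarith
    · exact heq
    · rw [abs_of_pos (by linarith)] at hsep
      nlinarith
  rw [← pt_fst_snd z, pt_eq_pt_iff]
  refine ⟨hfst, dist_eq_zero.1 <| pow_eq_zero_iff two_ne_zero |>.1 (le_antisymm ?_ (sq_nonneg _))⟩
  rw [hfst] at h
  linarith

lemma eq_or_eq_of_dist_le
    (he : ∀ p q, ‖e p - e q‖ ≥ (1 / 243) * Real.sqrt |(p.1 : ℝ) - (q.1 : ℝ)|)
    {z : R4} (hz : z ∈ spaceK e) (p : Icc (0:ℝ) 1 × D)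
    (hA : dist z (pt (p.1 / κ) (e p)) ≤ 1 - p.1 / κ) (hB : dist z (pt 1 (e p)) ≤ 1 - p.1 / κ) :
    z = pt (p.1 / κ) (e p) ∨ z = pt 1 (e p) := by
  have hs0 : 0 ≤ (p.1 : ℝ) / κ := by have := p.1.2.1; positivity
  have hs1 : (p.1 : ℝ) / κ ≤ 1 / κ := by gcongr; exact p.1.2.2
  rw [dist_le_iff_of_nonneg (by linarith)] at hA hB
  rcases hz with (hz | ⟨v, -, rfl⟩) | ⟨v, -, rfl⟩
  · exact Or.inl (eq_of_mem_closure_T_of_dist_le he hz p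
      ((dist_le_iff_of_nonneg (by linarith)).2 hB))
  · change (0 - 1) ^ 2 + dist v (e p) ^ 2 ≤ (1 - p.1 / κ) ^ 2 at hB
    have hs : (p.1 : ℝ) / κ = 0 := by nlinarith [sq_nonneg (dist v (e p))]
    refine Or.inl (pt_eq_pt_iff.2 ⟨hs.symm, dist_eq_zero.1 ?_⟩)
    nlinarith [sq_nonneg (dist v (e p)), dist_nonneg (x := v) (y := e p)]
  · change (1 - p.1 / κ) ^ 2 + dist v (e p) ^ 2 ≤ (1 - p.1 / κ) ^ 2 at hA
    refine Or.inr (pt_eq_pt_iff.2 ⟨rfl, dist_eq_zero.1 ?_⟩)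
    nlinarith [dist_nonneg (x := v) (y := e p)]

lemma loopPt_mem_spaceK (hrange : ∀ p, e p ∈ cube) (x : Icc (0:ℝ) 1) (y b : D) (i : Fin 7) :
    loopPt (x / κ) (e (x, y)) (e (1, b)) i ∈ spaceK e := by
  have hm := midpoint_mem_cube (hrange (x, y)) (hrange (1, b))
  fin_cases i
  · exact Or.inl (Or.inl (subset_closure ⟨x, y, rfl⟩))
  · exact Or.inr ⟨_, hrange _, rfl⟩
  · exact Or.inr ⟨_, hm, rfl⟩
  · exact Or.inr ⟨_, hrange _, rfl⟩
  · exact Or.inl (Or.inl (subset_closure ⟨1, b, by simp [loopPt]⟩))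
  · exact Or.inl (Or.inr ⟨_, hrange _, rfl⟩)
  · exact Or.inl (Or.inr ⟨_, hm, rfl⟩)

noncomputable def loopVertex (hrange : ∀ p, e p ∈ cube) (x : Icc (0:ℝ) 1) (y b : D) :
    Fin 7 → spaceK e :=
  fun i => ⟨_, loopPt_mem_spaceK hrange x y b i⟩

variable (hrange : ∀ p, e p ∈ cube) (x : Icc (0:ℝ) 1)

lemma loopVertex_edge_eq_iff (hinj : Function.Injective e) (y y' b : D) (i : Fin 7) :
    (loopVertex hrange x y b i, loopVertex hrange x y b (i + 1))
      = (loopVertex hrange x y' b 0, loopVertex hrange x y' b 1) ↔ i = 0 ∧ y = y' := by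
  have hs : (x : ℝ) / κ ≠ 1 := by have := x.2.2; norm_num; linarith
  have h := loopPt_edge_eq_iff (u := e (x, y)) (w := e (1, b)) hs (e (x, y')) i
  simp only [Prod.ext_iff, hinj.eq_iff, true_and] at h
  simp only [Prod.ext_iff, Subtype.ext_iff]
  exact h

lemma loopChain_loopVertex_apply [DecidableEq D] (hinj : Function.Injective e) (y y' b : D) :
    loopChain (loopVertex hrange x y b) (loopVertex hrange x y' b 0, loopVertex hrange x y' b 1)
      = if y = y' then 1 else 0 := by
  classical
  simp [loopChain_apply, loopVertex_edge_eq_iff hrange x hinj, ite_and]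

lemma loopChain_loopVertex_mem_cyclesOne (hinj : Function.Injective e) {y b : D} (hyb : y ≠ b) :
    loopChain (loopVertex hrange x y b) ∈ cyclesOne (ripsComplex (spaceK e) (1 - x / κ)) := by
  have hs : (x : ℝ) / κ ≤ 1 / κ := by gcongr; exact x.2.2
  have huw : e (x, y) ≠ e (1, b) := fun h => hyb (congrArg Prod.snd (hinj h))
  refine loopChain_mem_cyclesOne fun i =>
    ⟨fun h => loopPt_ne_succ hs huw i (congrArg Subtype.val h),
      pair_mem_ripsComplex (by linarith) ?_⟩
  rw [Subtype.dist_eq]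
  exact dist_loopPt_succ_le hs (hrange _) (hrange _) i

lemma apply_loopVertex_edge_eq_zero_of_mem_boundariesOne
    (he : ∀ p q, ‖e p - e q‖ ≥ (1 / 243) * Real.sqrt |(p.1 : ℝ) - (q.1 : ℝ)|) (y b : D)
    {c : (spaceK e × spaceK e) →₀ ℤ}
    (hc : c ∈ boundariesOne (ripsComplex (spaceK e) (1 - x / κ))) :
    c (loopVertex hrange x y b 0, loopVertex hrange x y b 1) = 0 := by
  refine apply_eq_zero_of_mem_boundariesOne
    (not_exists_triangle_of_forall_eq_or_eq fun m hA hB => ?_) hc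
  rw [Subtype.dist_eq] at hA hB
  simp only [Subtype.ext_iff]
  exact eq_or_eq_of_dist_le he m.2 (x, y) hA hB

end SpaceK

theorem stmt_18 {D : Type} (hD : Cardinal.mk D = 2 ^ Cardinal.aleph0)
    (e : Set.Icc (0:ℝ) 1 × D → EuclideanSpace ℝ (Fin 3))
    (hrange : ∀ p, ∀ i, e p i ∈ Set.Icc (0:ℝ) 1) (hinj : Function.Injective e)
    (he : ∀ p q, ‖e p - e q‖ ≥ (1 / 243) * Real.sqrt |(p.1 : ℝ) - (q.1 : ℝ)|)
    (a : ℝ) (ha : a ∈ Set.Icc (1 - 1 / (2 * 243 ^ 2)) 1) :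
    2 ^ Cardinal.aleph0 ≤ Module.rank ℤ
      (simplicialH1 (ripsComplex
        (↥(closure (T e) ∪ pt 0 '' cube ∪ pt 1 '' cube)) a)) := by
  classical
  obtain ⟨x, rfl⟩ : ∃ x : Icc (0:ℝ) 1, a = 1 - x / κ :=
    ⟨⟨(1 - a) * κ, by constructor <;> nlinarith [ha.1, ha.2]⟩, by field_simp; ring⟩
  have : Infinite D := Cardinal.infinite_iff.2 (hD ▸ (Cardinal.cantor _).le)
  obtain ⟨b⟩ : Nonempty D := inferInstance
  have hcard : Cardinal.mk ({b}ᶜ : Set D) = Cardinal.mk D := Cardinal.mk_compl_of_infinite _ <| by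
    rw [Cardinal.mk_singleton]; exact Cardinal.one_lt_aleph0.trans_le (Cardinal.aleph0_le_mk D)
  rw [← hD, ← hcard]
  exact cardinal_le_rank_simplicialH1
    (fun y => ⟨_, loopChain_loopVertex_mem_cyclesOne hrange x hinj y.2⟩)
    (fun y => (loopVertex hrange x y b 0, loopVertex hrange x y b 1))
    (fun y _ hc => apply_loopVertex_edge_eq_zero_of_mem_boundariesOne hrange x he y b hc)
    (fun y y' => by
      rw [loopChain_loopVertex_apply hrange x hinj]
      exact if_congr (Subtype.coe_inj.trans eq_comm) rfl rfl)
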